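/- arXiv:1506.02697 — 4 statements merged into one kernel-verified Lean document; each statement's English description precedes it below -/
import Mathlib

section
/- In a finite connected weighted graph with boundary B, if a random walk particle is started at each boundary vertex b ∈ B with multiplicity equal to its degree d(b) and each particle is stopped upon its first return to B, then for every interior vertex x, the expected total number of visits to x by all particles equals d(x). -/
/-- In a finite connected weighted graph with nonempty boundary `B`, start
`d(b)` random walk particles at each `b ∈ B`, each stopped upon its first return to `B`
(first time `t ≥ 1` in `B`). Then for every interior vertex `x`, the expected total number
of visits to `x` by all particles equals `d(x)`.

Here `N z` denotes the expected number of visits to `x` (at times `t ≥ 0`) by the walk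
started at `z` and stopped on first arrival (`t ≥ 0`) in `B`; it is characterized by the
usual one-step recurrence. The expected number of visits to `x` by a particle started at
`b ∈ B` and stopped at its first return to `B` is `∑ z, p(b,z) * N z`, so that the grand
total over all particles is `∑ b ∈ B, d(b) * ∑ z, (c b z / d b) * N z = ∑ b ∈ B, ∑ z, c b z * N z`. -/
theorem stmt_1 {V : Type*} [Fintype V] [DecidableEq V]
    (c : V → V → ℝ)
    (hsymm : ∀ x y, c x y = c y x)
    (hnonneg : ∀ x y, 0 ≤ c x y)
    (hconn : ∀ x y : V, Relation.ReflTransGen (fun a b => 0 < c a b) x y)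
    (B : Finset V) (hB : B.Nonempty)
    (x : V) (hx : x ∉ B)
    (N : V → ℝ)
    (hNB : ∀ y ∈ B, N y = 0)
    (hNrec : ∀ y, y ∉ B →
      N y = (if y = x then 1 else 0) + ∑ z, (c y z / ∑ w, c y w) * N z) :
    ∑ b ∈ B, ∑ z, c b z * N z = ∑ w, c x w := by
  have hd : ∀ y, y ∉ B → 0 < ∑ w, c y w := by
    intro y hy
    obtain ⟨b, hb⟩ := hB
    have hyb : y ≠ b := fun h => hy (h ▸ hb)
    rcases (hconn y b).cases_head with h | ⟨z, hz, -⟩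
    · exact absurd h hyb
    · have h1 : c y z ≤ ∑ w, c y w :=
        Finset.single_le_sum (fun w _ => hnonneg y w) (Finset.mem_univ z)
      linarith
  have key : ∀ y ∉ B, (∑ w, c y w) * N y
      = (∑ w, c y w) * (if y = x then 1 else 0) + ∑ z, c y z * N z := by
    intro y hy
    have hdy := (hd y hy).ne'
    rw [hNrec y hy, mul_add]
    congr 1
    rw [Finset.mul_sum]
    refine Finset.sum_congr rfl fun z _ => ?_
    field_simp
  have hsum : ∑ y, ∑ z, c y z * N z = ∑ y, (∑ w, c y w) * N y := by
    rw [Finset.sum_comm]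
    refine Finset.sum_congr rfl fun z _ => ?_
    rw [Finset.sum_mul]
    exact Finset.sum_congr rfl fun y _ => by rw [hsymm z y]
  have hzero : ∑ y, ((∑ w, c y w) * N y - ∑ z, c y z * N z) = 0 := by
    rw [Finset.sum_sub_distrib, hsum, sub_self]
  rw [← Finset.sum_add_sum_compl B] at hzero
  have hBpart : ∑ y ∈ B, ((∑ w, c y w) * N y - ∑ z, c y z * N z)
      = -∑ y ∈ B, ∑ z, c y z * N z := by
    rw [← Finset.sum_neg_distrib]
    refine Finset.sum_congr rfl fun y hy => ?_
    rw [hNB y hy, mul_zero, zero_sub]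
  have hCpart : ∑ y ∈ Bᶜ, ((∑ w, c y w) * N y - ∑ z, c y z * N z) = ∑ w, c x w := by
    have : ∀ y ∈ Bᶜ, (∑ w, c y w) * N y - ∑ z, c y z * N z
        = if y = x then ∑ w, c y w else 0 := by
      intro y hy
      rw [key y (Finset.mem_compl.mp hy)]
      by_cases h : y = x <;> simp [h]
    rw [Finset.sum_congr rfl this, Finset.sum_ite_eq' Bᶜ x (fun y => ∑ w, c y w),
      if_pos (Finset.mem_compl.mpr hx)]
  rw [hBpart, hCpart] at hzero
  linarith
end

section
/- Let T be the rooted d-ary tree (d ≥ 2) and let C, D be two disjoint branches (components of T minus an edge, not containing the root). Then the expected number of edges of the Group-Walk random graph R_n joining a vertex of C ∩ ∂T_n to a vertex of D ∩ ∂T_n converges to a finite positive limit as n → ∞. -/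
/-- The sphere of radius `n` in the rooted `d`-ary tree, whose vertices are words over
`Fin d` (the root is the empty word, children are obtained by appending a letter). -/
def ternSphere (d : ℕ) : ℕ → Finset (List (Fin d))
  | 0 => {[]}
  | n + 1 => (ternSphere d n).biUnion
      (fun l => Finset.univ.image (fun i : Fin d => l ++ [i]))

/-!
Let `F` be harmonic on the ball `T_n` with boundary values the indicator of the branch below
`w'`, and let `T_j` be the sum of `F` over the `d ^ j` descendants at distance `j` of a fixed
vertex `w`. Harmonicity gives `(d + 1) T_{j+1} = d T_j + T_{j+2}`, so the increments of `T`
grow geometrically, and at `j = n - |w|` the value `T_j` is an explicit boundary count. At the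
root this yields `F [] = d ^ (-|w'|)`; at any other vertex a linear relation between `F` there
and at its parent whose coefficients converge after rescaling by `d ^ (-n)`, so by induction
along the path from the root `F_n v` tends to a positive limit whenever `v` is not below `w'`.
If `v` and `w'` are incomparable the boundary count below `v` vanishes, and the contribution
of the branch of `v` comes out as `(d - 1) d^m / (d^m - 1) · F_n v` with `m = n - |v|`, which
tends to `(d - 1) lim F_n v > 0`.
-/

open Finset Filter Topology

section

variable {d : ℕ}

theorem mem_ternSphere {n : ℕ} {l : List (Fin d)} : l ∈ ternSphere d n ↔ l.length = n := by
  induction n generalizing l with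
  | zero => simp [ternSphere]
  | succ n ih =>
    simp only [ternSphere, mem_biUnion, mem_image, mem_univ, true_and, ih]
    constructor
    · rintro ⟨l', rfl, i, rfl⟩
      simp
    · intro h
      have hne : l ≠ [] := by rintro rfl; simp at h
      exact ⟨l.dropLast, by simp [h], l.getLast hne, l.dropLast_append_getLast hne⟩

theorem sum_ternSphere_succ {M : Type*} [AddCommMonoid M] (n : ℕ) (G : List (Fin d) → M) :
    ∑ l ∈ ternSphere d (n + 1), G l = ∑ l ∈ ternSphere d n, ∑ i : Fin d, G (l ++ [i]) := by
  rw [ternSphere, sum_biUnion]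
  · exact sum_congr rfl fun l _ => sum_image fun i _ j _ h => by simpa using h
  · intro a ha b hb hab
    simp only [Function.onFun, disjoint_left, mem_image, mem_univ, true_and]
    rintro _ ⟨i, rfl⟩ ⟨j, h⟩
    exact hab (List.append_inj h (by rw [mem_ternSphere.1 ha, mem_ternSphere.1 hb])).1.symm

theorem card_ternSphere (n : ℕ) : #(ternSphere d n) = d ^ n := by
  induction n with
  | zero => simp [ternSphere]
  | succ n ih =>
    rw [card_eq_sum_ones, sum_ternSphere_succ]
    simp [ih, pow_succ]

theorem sum_ternSphere_prefix {M : Type*} [AddCommMonoid M] (p : List (Fin d)) (m : ℕ)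
    (G : List (Fin d) → M) :
    ∑ l ∈ ternSphere d (p.length + m), (if p <+: l then G l else 0)
      = ∑ s ∈ ternSphere d m, G (p ++ s) := by
  have himage : {l ∈ ternSphere d (p.length + m) | p <+: l} = (ternSphere d m).image (p ++ ·) := by
    ext l
    simp only [mem_filter, mem_image, mem_ternSphere]
    constructor
    · rintro ⟨hl, s, rfl⟩
      exact ⟨s, by simpa using hl, rfl⟩
    · rintro ⟨s, hs, rfl⟩
      exact ⟨by simp [hs], List.prefix_append p s⟩
  rw [← sum_filter, himage, sum_image fun s _ t _ h => List.append_cancel_left h]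

theorem sum_ternSphere_indicator_prefix (p : List (Fin d)) {m : ℕ} (h : p.length ≤ m) :
    ∑ s ∈ ternSphere d m, (if p <+: s then (1 : ℝ) else 0) = (d : ℝ) ^ (m - p.length) := by
  obtain ⟨k, rfl⟩ := Nat.exists_eq_add_of_le h
  rw [sum_ternSphere_prefix, sum_const, card_ternSphere]
  simp

theorem sub_one_mul_sub_eq_of_rec {R : Type*} [CommRing R] {u : ℕ → R} {a : R} {N : ℕ}
    (h : ∀ j, j + 1 < N → (a + 1) * u (j + 1) = a * u j + u (j + 2)) {j : ℕ} (hj : j ≤ N) :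
    (a - 1) * (u j - u 0) = (a ^ j - 1) * (u 1 - u 0) := by
  have hdiff : ∀ i, i + 1 ≤ N → u (i + 1) - u i = a ^ i * (u 1 - u 0) := by
    intro i
    induction i with
    | zero => simp
    | succ i ih => intro hi; linear_combination -h i (by omega) + a * ih (by omega)
  induction j with
  | zero => simp
  | succ j ih => linear_combination ih (by omega) + (a - 1) * hdiff j hj

def IsHarmonicOnBall (d n : ℕ) (F : List (Fin d) → ℝ) : Prop :=
  ∀ l : List (Fin d), l.length < n →
    F l * (if l = [] then (d : ℝ) else d + 1)
      = (if l = [] then 0 else F l.dropLast) + ∑ i : Fin d, F (l ++ [i])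

def shellSum (F : List (Fin d) → ℝ) (w : List (Fin d)) (j : ℕ) : ℝ :=
  ∑ s ∈ ternSphere d j, F (w ++ s)

theorem shellSum_zero (F : List (Fin d) → ℝ) (w : List (Fin d)) : shellSum F w 0 = F w := by
  simp [shellSum, ternSphere]

theorem shellSum_one (F : List (Fin d) → ℝ) (w : List (Fin d)) :
    shellSum F w 1 = ∑ i : Fin d, F (w ++ [i]) := by
  rw [shellSum, ← zero_add 1, sum_ternSphere_succ]
  simp [ternSphere]

namespace IsHarmonicOnBall

variable {n : ℕ} {F : List (Fin d) → ℝ}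

theorem shellSum_rec (hF : IsHarmonicOnBall d n F) (w : List (Fin d)) {j : ℕ}
    (h : w.length + j + 1 < n) :
    ((d : ℝ) + 1) * shellSum F w (j + 1) = d * shellSum F w j + shellSum F w (j + 2) := by
  have hstep : ∀ s ∈ ternSphere d j, ∀ i : Fin d, ((d : ℝ) + 1) * F (w ++ s ++ [i])
      = F (w ++ s) + ∑ k : Fin d, F (w ++ s ++ [i] ++ [k]) := by
    intro s hs i
    simpa [mul_comm] using hF (w ++ s ++ [i]) (by simp [mem_ternSphere.1 hs]; omega)
  simp only [shellSum, sum_ternSphere_succ, ← List.append_assoc, mul_sum]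
  rw [sum_congr rfl fun s hs => sum_congr rfl fun i _ => hstep s hs i]
  simp [sum_add_distrib]

theorem shellSum_geom (hF : IsHarmonicOnBall d n F) (w : List (Fin d)) {j : ℕ}
    (h : w.length + j ≤ n) :
    ((d : ℝ) - 1) * (shellSum F w j - F w) = ((d : ℝ) ^ j - 1) * (shellSum F w 1 - F w) := by
  rw [← shellSum_zero F w]
  exact sub_one_mul_sub_eq_of_rec (N := n - w.length)
    (fun k hk => hF.shellSum_rec w (by omega)) (by omega)

end IsHarmonicOnBall

section Boundary

variable {n : ℕ} {F : List (Fin d) → ℝ} {w' : List (Fin d)}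

theorem shellSum_of_boundary_of_prefix
    (hFb : ∀ l ∈ ternSphere d n, F l = if w' <+: l then 1 else 0) {w : List (Fin d)}
    (h : w <+: w') (hn : w'.length ≤ n) :
    shellSum F w (n - w.length) = (d : ℝ) ^ (n - w'.length) := by
  obtain ⟨r, rfl⟩ := h
  simp only [List.length_append] at hn ⊢
  have hF : ∀ s ∈ ternSphere d (n - w.length), F (w ++ s) = if r <+: s then 1 else 0 := by
    intro s hs
    have hl : (w ++ s).length = n := by simp [mem_ternSphere.1 hs]; omega
    simp only [hFb _ (mem_ternSphere.2 hl), List.prefix_append_right_inj]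
  rw [shellSum, sum_congr rfl hF, sum_ternSphere_indicator_prefix r (by omega), Nat.sub_sub]

theorem shellSum_of_boundary_of_incomparable
    (hFb : ∀ l ∈ ternSphere d n, F l = if w' <+: l then 1 else 0) {w : List (Fin d)}
    (h : ¬ w <+: w' ∧ ¬ w' <+: w) (hn : w.length ≤ n) :
    shellSum F w (n - w.length) = 0 := by
  refine sum_eq_zero fun s hs => ?_
  rw [hFb _ (mem_ternSphere.2 (by simp [mem_ternSphere.1 hs]; omega)), if_neg]
  exact fun hw' => (List.prefix_or_prefix_of_prefix (List.prefix_append w s) hw').elim h.1 h.2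

end Boundary

namespace IsHarmonicOnBall

variable {n : ℕ} {F : List (Fin d) → ℝ} {w' : List (Fin d)}

theorem apply_nil (hd : 2 ≤ d) (hF : IsHarmonicOnBall d n F)
    (hFb : ∀ l ∈ ternSphere d n, F l = if w' <+: l then 1 else 0)
    (hn : 0 < n) (hw' : w'.length ≤ n) :
    F [] = ((d : ℝ) ^ w'.length)⁻¹ := by
  have hd' : (1 : ℝ) < d := by exact_mod_cast hd
  have hgeom := hF.shellSum_geom [] (j := n) (by simp)
  have hT₁ : shellSum F [] 1 = d * F [] := by
    simpa [shellSum_one, mul_comm] using (hF [] hn).symm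
  have hTn : shellSum F [] n = (d : ℝ) ^ n * ((d : ℝ) ^ w'.length)⁻¹ := by
    simpa [pow_sub₀ _ (by positivity : (d : ℝ) ≠ 0) hw'] using
      shellSum_of_boundary_of_prefix hFb w'.nil_prefix hw'
  rw [hT₁, hTn] at hgeom
  have hkey : ((d : ℝ) - 1) * (d : ℝ) ^ n * (((d : ℝ) ^ w'.length)⁻¹ - F []) = 0 := by
    linear_combination hgeom
  have hne : ((d : ℝ) - 1) * (d : ℝ) ^ n ≠ 0 := mul_ne_zero (sub_ne_zero.2 hd'.ne') (by positivity)
  exact (sub_eq_zero.1 ((mul_eq_zero.1 hkey).resolve_left hne)).symm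

theorem apply_dropLast_mul (hF : IsHarmonicOnBall d n F) {q : List (Fin d)} (hq : q ≠ [])
    (hqn : q.length < n) :
    F q.dropLast * ((d : ℝ) ^ (n - q.length) - 1) + ((d : ℝ) - 1) * shellSum F q (n - q.length)
      = F q * ((d : ℝ) ^ (n - q.length + 1) - 1) := by
  have hgeom := hF.shellSum_geom q (j := n - q.length) (by omega)
  have hq' := hF q hqn
  simp only [if_neg hq] at hq'
  rw [shellSum_one] at hgeom
  linear_combination hgeom - ((d : ℝ) ^ (n - q.length) - 1) * hq'

theorem sum_prefix_dropLast (hd : 2 ≤ d) (hF : IsHarmonicOnBall d n F)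
    (hFb : ∀ l ∈ ternSphere d n, F l = if w' <+: l then 1 else 0) {v : List (Fin d)}
    (hv : ¬ v <+: w' ∧ ¬ w' <+: v) (hvn : v.length < n) :
    ∑ l ∈ ternSphere d n, (if v <+: l then F l.dropLast else 0)
      = F v * (((d : ℝ) - 1) * ((d : ℝ) ^ (n - v.length) / ((d : ℝ) ^ (n - v.length) - 1))) := by
  obtain ⟨m, hm⟩ : ∃ m, n - v.length = m + 1 := ⟨n - v.length - 1, by omega⟩
  have hd' : (1 : ℝ) < d := by exact_mod_cast hd
  have hsum : ∑ l ∈ ternSphere d n, (if v <+: l then F l.dropLast else 0)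
      = d * shellSum F v m := by
    rw [show n = v.length + (m + 1) by omega, sum_ternSphere_prefix, sum_ternSphere_succ,
      shellSum, mul_sum]
    refine sum_congr rfl fun s _ => ?_
    simp [← List.append_assoc]
  have hgeom := hF.shellSum_geom v (j := m) (by omega)
  have hgeom' := hF.shellSum_geom v (j := m + 1) (by omega)
  rw [← hm, shellSum_of_boundary_of_incomparable hFb hv hvn.le, hm] at hgeom'
  have hkey : ((d : ℝ) - 1) * (((d : ℝ) ^ (m + 1) - 1) * shellSum F v m
      - F v * (d : ℝ) ^ m * ((d : ℝ) - 1)) = 0 := by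
    linear_combination ((d : ℝ) ^ (m + 1) - 1) * hgeom - ((d : ℝ) ^ m - 1) * hgeom'
  have hpow : (d : ℝ) ^ (m + 1) - 1 ≠ 0 := sub_ne_zero.2 (one_lt_pow₀ hd' m.succ_ne_zero).ne'
  rw [mul_eq_zero, sub_eq_zero, sub_eq_zero] at hkey
  rw [hsum, hm]
  field_simp
  linear_combination (d : ℝ) * hkey.resolve_left hd'.ne'

end IsHarmonicOnBall

theorem tendsto_of_eventually_mul_sub_eq {α : Type*} {l : Filter α} {u v ε : α → ℝ} {a L : ℝ}
    (ha : a ≠ 0) (hε : Tendsto ε l (𝓝 0)) (hv : Tendsto v l (𝓝 L))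
    (h : ∀ᶠ n in l, u n * (a - ε n) = v n) : Tendsto u l (𝓝 (L / a)) := by
  have hden : Tendsto (fun n => a - ε n) l (𝓝 a) := by
    simpa using tendsto_const_nhds.sub hε
  refine (hv.div hden ha).congr' ?_
  filter_upwards [h, hden.eventually_ne ha] with n hn hne
  rw [Pi.div_apply, ← hn, mul_div_cancel_right₀ _ hne]

theorem tendsto_inv_pow_atTop_zero {x : ℝ} (hx : 1 < x) :
    Tendsto (fun m : ℕ => (x ^ m)⁻¹) atTop (𝓝 0) :=
  tendsto_inv_atTop_zero.comp (tendsto_pow_atTop_atTop_of_one_lt hx)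

theorem tendsto_pow_div_pow_sub_one {x : ℝ} (hx : 1 < x) :
    Tendsto (fun m : ℕ => x ^ m / (x ^ m - 1)) atTop (𝓝 1) := by
  have h : ∀ᶠ m in atTop, x ^ m / (x ^ m - 1) * (1 - (x ^ m)⁻¹) = 1 := by
    filter_upwards [eventually_ne_atTop 0] with m hm
    have : x ^ m - 1 ≠ 0 := sub_ne_zero.2 (one_lt_pow₀ hx hm).ne'
    field_simp
  simpa using tendsto_of_eventually_mul_sub_eq one_ne_zero (tendsto_inv_pow_atTop_zero hx)
    tendsto_const_nhds h

theorem exists_pos_tendsto_of_not_prefix (hd : 2 ≤ d) {F : ℕ → List (Fin d) → ℝ}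
    {w' : List (Fin d)} (hF : ∀ n, IsHarmonicOnBall d n (F n))
    (hFb : ∀ n, ∀ l ∈ ternSphere d n, F n l = if w' <+: l then 1 else 0) (w : List (Fin d))
    (hw : ¬ w' <+: w) : ∃ c, 0 < c ∧ Tendsto (fun n => F n w) atTop (𝓝 c) := by
  have hd' : (1 : ℝ) < d := by exact_mod_cast hd
  have hd0 : (d : ℝ) ≠ 0 := by positivity
  induction w using List.reverseRecOn with
  | nil =>
    refine ⟨((d : ℝ) ^ w'.length)⁻¹, by positivity, tendsto_const_nhds.congr' ?_⟩
    filter_upwards [eventually_gt_atTop w'.length] with n hn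
    exact ((hF n).apply_nil hd (hFb n) (by omega) hn.le).symm
  | append_singleton w i ih =>
    obtain ⟨c, hc, hlim⟩ := ih fun h => hw (h.trans (w.prefix_append [i]))
    set q := w ++ [i] with hq
    have hqlen : q.length = w.length + 1 := by simp [hq]
    set X : ℝ := if q <+: w' then ((d : ℝ) ^ w'.length)⁻¹ else 0 with hX
    have hX0 : 0 ≤ X := by rw [hX]; split_ifs <;> positivity
    -- `apply_dropLast_mul` at `q`, divided by `d ^ n`
    have hstep : ∀ᶠ n in atTop, F n q * (((d : ℝ) ^ w.length)⁻¹ - ((d : ℝ) ^ n)⁻¹)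
        = F n w * (((d : ℝ) ^ q.length)⁻¹ - ((d : ℝ) ^ n)⁻¹) + ((d : ℝ) - 1) * X := by
      filter_upwards [eventually_gt_atTop (q.length + w'.length)] with n hn
      have hN : shellSum (F n) q (n - q.length) = (d : ℝ) ^ n * X := by
        by_cases hqw : q <+: w'
        · rw [shellSum_of_boundary_of_prefix (hFb n) hqw (by omega), pow_sub₀ _ hd0 (by omega),
            hX, if_pos hqw]
        · rw [shellSum_of_boundary_of_incomparable (hFb n) ⟨hqw, hw⟩ (by omega), hX, if_neg hqw,
            mul_zero]
      have h := (hF n).apply_dropLast_mul (q := q) (by simp [hq]) (by omega)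
      rw [hN, hq, List.dropLast_concat, ← hq, show n - q.length + 1 = n - w.length by omega,
        pow_sub₀ _ hd0 (by omega : q.length ≤ n), pow_sub₀ _ hd0 (by omega : w.length ≤ n)] at h
      have ha : (d : ℝ) ^ n * ((d : ℝ) ^ n)⁻¹ = 1 := mul_inv_cancel₀ (by positivity)
      linear_combination -((d : ℝ) ^ n)⁻¹ * h + (F n w * ((d : ℝ) ^ q.length)⁻¹
        + ((d : ℝ) - 1) * X - F n q * ((d : ℝ) ^ w.length)⁻¹) * ha
    refine ⟨(c * ((d : ℝ) ^ q.length)⁻¹ + ((d : ℝ) - 1) * X) / ((d : ℝ) ^ w.length)⁻¹,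
      div_pos (add_pos_of_pos_of_nonneg (by positivity) (mul_nonneg (by linarith) hX0))
        (by positivity), ?_⟩
    refine tendsto_of_eventually_mul_sub_eq (by positivity) (tendsto_inv_pow_atTop_zero hd') ?_
      hstep
    simpa using (hlim.mul (tendsto_const_nhds.sub (tendsto_inv_pow_atTop_zero hd'))).add_const
      (((d : ℝ) - 1) * X)

theorem exists_pos_tendsto_sum_prefix_dropLast (hd : 2 ≤ d) {F : ℕ → List (Fin d) → ℝ}
    {w' : List (Fin d)} (hF : ∀ n, IsHarmonicOnBall d n (F n))
    (hFb : ∀ n, ∀ l ∈ ternSphere d n, F n l = if w' <+: l then 1 else 0) {v : List (Fin d)}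
    (hv : ¬ v <+: w' ∧ ¬ w' <+: v) :
    ∃ L, 0 < L ∧ Tendsto (fun n => ∑ l ∈ ternSphere d n, if v <+: l then F n l.dropLast else 0)
      atTop (𝓝 L) := by
  have hd' : (1 : ℝ) < d := by exact_mod_cast hd
  obtain ⟨c, hc, hlim⟩ := exists_pos_tendsto_of_not_prefix hd hF hFb v hv.2
  have hfrac := (tendsto_pow_div_pow_sub_one hd').comp (tendsto_sub_atTop_nat v.length)
  refine ⟨c * (((d : ℝ) - 1) * 1), mul_pos hc (by linarith), ?_⟩
  refine (hlim.mul (hfrac.const_mul _)).congr' ?_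
  filter_upwards [eventually_gt_atTop v.length] with n hn
  exact ((hF n).sum_prefix_dropLast hd (hFb n) hv hn).symm

end

theorem stmt_5_general (d : ℕ) (hd : 2 ≤ d)
    (w₁ w₂ : List (Fin d))
    (hdisj : ¬ w₁ <+: w₂ ∧ ¬ w₂ <+: w₁)
    (f g : ℕ → List (Fin d) → ℝ)
    (hfb : ∀ n, ∀ l ∈ ternSphere d n, f n l = if w₂ <+: l then 1 else 0)
    (hgb : ∀ n, ∀ l ∈ ternSphere d n, g n l = if w₁ <+: l then 1 else 0)
    (hfh : ∀ n, ∀ l : List (Fin d), l.length < n →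
      f n l * (if l = [] then (d : ℝ) else d + 1)
        = (if l = [] then 0 else f n l.dropLast) + ∑ i : Fin d, f n (l ++ [i]))
    (hgh : ∀ n, ∀ l : List (Fin d), l.length < n →
      g n l * (if l = [] then (d : ℝ) else d + 1)
        = (if l = [] then 0 else g n l.dropLast) + ∑ i : Fin d, g n (l ++ [i])) :
    ∃ L : ℝ, 0 < L ∧
      Filter.Tendsto
        (fun n => ∑ l ∈ ternSphere d n,
          ((if w₁ <+: l then f n l.dropLast else 0)
            + (if w₂ <+: l then g n l.dropLast else 0)))
        Filter.atTop (nhds L) := by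
  obtain ⟨L₁, hL₁, h₁⟩ := exists_pos_tendsto_sum_prefix_dropLast hd hfh hfb hdisj
  obtain ⟨L₂, hL₂, h₂⟩ := exists_pos_tendsto_sum_prefix_dropLast hd hgh hgb hdisj.symm
  exact ⟨L₁ + L₂, add_pos hL₁ hL₂, by simpa only [sum_add_distrib] using h₁.add h₂⟩

/-- Let `T` be the rooted `d`-ary tree (`d ≥ 2`) and let `C`, `D` be two
disjoint branches (the sets of descendants of incomparable nonroot vertices `w₁`, `w₂`).
For the Group-Walk random graph `R_n` on the sphere `∂T_n` — from each `v ∈ ∂T_n` run a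
simple random walk in the ball `T_n`, stopped at its first return to `∂T_n`, and join `v`
to the stopping vertex — the expected number of edges of `R_n` joining `C ∩ ∂T_n` to
`D ∩ ∂T_n` converges, as `n → ∞`, to a finite positive limit.

Since the first step of the walk from `v ∈ ∂T_n` necessarily goes to the parent
`v.dropLast`, this expectation equals
`Σ_{v ∈ C ∩ ∂T_n} f_n(parent v) + Σ_{v ∈ D ∩ ∂T_n} g_n(parent v)`, where `f n` (resp.
`g n`) is the harmonic function on the ball with boundary values the indicator of
`D ∩ ∂T_n` (resp. `C ∩ ∂T_n`), i.e. the probability of being stopped in the other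
branch. Interior vertices have degree `d + 1` in the ball except the root, of degree `d`. -/
theorem stmt_5 (d : ℕ) (hd : 2 ≤ d)
    (w₁ w₂ : List (Fin d)) (hw₁ : w₁ ≠ []) (hw₂ : w₂ ≠ [])
    (hdisj : ¬ w₁ <+: w₂ ∧ ¬ w₂ <+: w₁)
    (f g : ℕ → List (Fin d) → ℝ)
    (hfb : ∀ n, ∀ l ∈ ternSphere d n, f n l = if w₂ <+: l then 1 else 0)
    (hgb : ∀ n, ∀ l ∈ ternSphere d n, g n l = if w₁ <+: l then 1 else 0)
    (hfh : ∀ n, ∀ l : List (Fin d), l.length < n →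
      f n l * (if l = [] then (d : ℝ) else d + 1)
        = (if l = [] then 0 else f n l.dropLast) + ∑ i : Fin d, f n (l ++ [i]))
    (hgh : ∀ n, ∀ l : List (Fin d), l.length < n →
      g n l * (if l = [] then (d : ℝ) else d + 1)
        = (if l = [] then 0 else g n l.dropLast) + ∑ i : Fin d, g n (l ++ [i])) :
    ∃ L : ℝ, 0 < L ∧
      Filter.Tendsto
        (fun n => ∑ l ∈ ternSphere d n,
          ((if w₁ <+: l then f n l.dropLast else 0)
            + (if w₂ <+: l then g n l.dropLast else 0)))
        Filter.atTop (nhds L) :=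
  stmt_5_general d hd w₁ w₂ hdisj f g hfb hgb hfh hgh
end

section
/- Let K be a finite subset of the vertex set of a locally finite transient graph G. The equilibrium measure e_K, defined by e_K(x) = d(x) · P_x[random walk never returns to K] for x ∈ K, satisfies e_K(x) = lim_{n→∞} c_{*_n} P_{*_n}[X_τ = x], where *_n is the vertex obtained by contracting the complement of the ball G_n to a single vertex, and τ is the first hitting time of K ∪ {*_n}. -/
/-!
Let `φₙ` be the probability of hitting `K` before leaving the ball `Gₙ`, and `Lₙ` the Laplacian
of the walk killed on leaving `Gₙ`. Since `Lₙ 1 (u)` counts the edges from `u` to the complement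
of the ball, the quantity `c_{*ₙ} P_{*ₙ}[X_τ = x]` is `∑ Lₙ 1 · ψₙ`. Green's symmetry of `Lₙ`,
used once against `1` and once against `φₙ` (both equal to `1` on `K`, while `ψₙ` and `φₙ` are
`Lₙ`-harmonic off `K`), turns it into `Lₙ φₙ (x) = d(x) - ∑_{w ∼ x} φₙ(w)` once the ball contains
the neighbours of `x`. Finally the `φₙ` increase to a solution of the equations defining `hK`, so by
minimality `φₙ → hK`.
-/

open Filter Finset unitInterval

theorem Finset.eventually_subset_of_monotone_of_exhaustive {V : Type*} {B : ℕ → Finset V}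
    (hB : Monotone B) (hexh : ∀ z, ∃ n, z ∈ B n) (s : Finset V) : ∀ᶠ n in atTop, s ⊆ B n := by
  refine (eventually_all_finset s).2 fun z _ => ?_
  obtain ⟨n, hn⟩ := hexh z
  exact eventually_atTop.2 ⟨n, fun m hm => hB hm hn⟩

namespace SimpleGraph

theorem Connected.finite_setOf_dist_le {V : Type*} {G : SimpleGraph V}
    [∀ v : V, Fintype (G.neighborSet v)] (hG : G.Connected) (o : V) (n : ℕ) :
    {z | G.dist o z ≤ n}.Finite := by
  induction n with
  | zero => simp [hG.dist_eq_zero_iff]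
  | succ n ih =>
    refine (ih.union (ih.biUnion fun u _ => (G.neighborSet u).toFinite)).subset fun z hz => ?_
    obtain hz | hz := Nat.le_succ_iff.mp hz
    · exact Or.inl hz
    obtain ⟨p, hp⟩ := (hG z o).exists_walk_length_eq_dist
    rw [dist_comm] at hz
    cases p with
    | nil => simp at hz
    | cons hzu q =>
      refine Or.inr (Set.mem_biUnion ?_ hzu.symm)
      have := G.dist_le q
      rw [Set.mem_ofPred_eq, dist_comm]
      simp only [Walk.length_cons] at hp
      omega

variable {V : Type*} (G : SimpleGraph V) [∀ v : V, Fintype (G.neighborSet v)]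

theorem degree_mul_sum_div_degree {z : V} {s : Finset V} (hs : s ⊆ G.neighborFinset z)
    (f : V → ℝ) : (G.degree z : ℝ) * ((∑ w ∈ s, f w) / G.degree z) = ∑ w ∈ s, f w := by
  obtain hd | hd := eq_or_ne (G.degree z) 0
  · rw [← card_neighborFinset_eq_degree, card_eq_zero] at hd
    simp [subset_empty.mp (hd ▸ hs)]
  · exact mul_div_cancel₀ _ (Nat.cast_ne_zero.mpr hd)

theorem sum_div_degree_mem_unitInterval (z : V) (p : V → Prop) [DecidablePred p] (q : V → I) :
    (∑ w ∈ G.neighborFinset z with p w, (q w : ℝ)) / G.degree z ∈ I := by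
  refine ⟨div_nonneg (sum_nonneg fun w _ => nonneg (q w)) (Nat.cast_nonneg _),
    div_le_one_of_le₀ ?_ (Nat.cast_nonneg _)⟩
  calc ∑ w ∈ G.neighborFinset z with p w, (q w : ℝ)
      ≤ #{w ∈ G.neighborFinset z | p w} := by simpa using sum_le_sum fun w _ => le_one (q w)
    _ ≤ G.degree z := by
      rw [← card_neighborFinset_eq_degree]; exact_mod_cast card_filter_le _ _

section Dirichlet

variable [DecidableEq V]

noncomputable def dirichletLaplacian (B : Finset V) (f : V → ℝ) (u : V) : ℝ :=
  G.degree u * f u - ∑ w ∈ G.neighborFinset u with w ∈ B, f w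

theorem dirichletLaplacian_of_neighborFinset_subset {B : Finset V} {u : V}
    (hu : G.neighborFinset u ⊆ B) (f : V → ℝ) :
    G.dirichletLaplacian B f u = G.degree u * f u - ∑ w ∈ G.neighborFinset u, f w := by
  rw [dirichletLaplacian, filter_true_of_mem fun w hw => hu hw]

theorem sum_mul_dirichletLaplacian_comm (B : Finset V) (f g : V → ℝ) :
    ∑ u ∈ B, f u * G.dirichletLaplacian B g u = ∑ u ∈ B, g u * G.dirichletLaplacian B f u := by
  have hswap : ∑ u ∈ B, ∑ w ∈ G.neighborFinset u with w ∈ B, f u * g w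
      = ∑ u ∈ B, ∑ w ∈ G.neighborFinset u with w ∈ B, g u * f w := by
    rw [sum_comm' (t' := B) (s' := fun w => {u ∈ G.neighborFinset w | u ∈ B})]
    · simp only [mul_comm]
    · simp only [mem_filter, mem_neighborFinset]
      grind [adj_comm]
  simp only [dirichletLaplacian, mul_sub, mul_sum, sum_sub_distrib, hswap]
  congr 1
  exact sum_congr rfl fun u _ => by ring

theorem dirichletLaplacian_one (B : Finset V) (u : V) :
    G.dirichletLaplacian B 1 u = #{w ∈ G.neighborFinset u | w ∉ B} := by
  have hsplit := card_filter_add_card_filter_not (s := G.neighborFinset u) (· ∈ B)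
  rw [card_neighborFinset_eq_degree] at hsplit
  simp only [dirichletLaplacian, Pi.one_apply, mul_one, sum_const, nsmul_eq_mul, ← hsplit]
  push_cast
  ring

variable (K B : Finset V)

noncomputable def killedHittingStep : (V → I) →o (V → I) where
  toFun q z :=
    if z ∈ K then 1
    else if z ∈ B then ⟨_, G.sum_div_degree_mem_unitInterval z (· ∈ B) q⟩
    else 0
  monotone' q q' hq z := by
    dsimp only
    split_ifs
    · exact le_rfl
    · exact Subtype.mk_le_mk.2
        (div_le_div_of_nonneg_right (sum_le_sum fun w _ => hq w) (Nat.cast_nonneg _))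
    · exact le_rfl

theorem killedHittingStep_apply (q : V → I) (z : V) :
    G.killedHittingStep K B q z =
      if z ∈ K then 1
      else if z ∈ B then ⟨_, G.sum_div_degree_mem_unitInterval z (· ∈ B) q⟩
      else 0 :=
  rfl

/-- The probability of hitting `K` before leaving `B`, as the least solution of the
first-step equations. -/
noncomputable def killedHittingProb (z : V) : ℝ :=
  (OrderHom.lfp (G.killedHittingStep K B) z : ℝ)

variable {K B}

theorem killedHittingProb_nonneg (z : V) : 0 ≤ G.killedHittingProb K B z := nonneg _

theorem killedHittingProb_le_one (z : V) : G.killedHittingProb K B z ≤ 1 := le_one _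

theorem killedHittingProb_eq (z : V) :
    G.killedHittingProb K B z =
      if z ∈ K then 1
      else if z ∈ B then (∑ w ∈ G.neighborFinset z with w ∈ B, G.killedHittingProb K B w)
        / G.degree z
      else 0 := by
  conv_lhs => rw [killedHittingProb, ← OrderHom.map_lfp, killedHittingStep_apply]
  split_ifs <;> rfl

theorem killedHittingProb_of_mem {z : V} (hz : z ∈ K) : G.killedHittingProb K B z = 1 := by
  rw [killedHittingProb_eq, if_pos hz]

theorem dirichletLaplacian_killedHittingProb {z : V} (hzK : z ∉ K) (hzB : z ∈ B) :
    G.dirichletLaplacian B (G.killedHittingProb K B) z = 0 := by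
  rw [dirichletLaplacian, killedHittingProb_eq, if_neg hzK, if_pos hzB,
    G.degree_mul_sum_div_degree (filter_subset _ _), sub_self]

theorem killedHittingProb_mono {B' : Finset V} (hBB' : B ⊆ B') (z : V) :
    G.killedHittingProb K B z ≤ G.killedHittingProb K B' z := by
  have hstep : G.killedHittingStep K B ≤ G.killedHittingStep K B' := fun q z => by
    rw [killedHittingStep_apply, killedHittingStep_apply]
    split_ifs with hzK hzB hzB'
    · exact le_rfl
    · refine Subtype.mk_le_mk.2 (div_le_div_of_nonneg_right ?_ (Nat.cast_nonneg _))
      exact sum_le_sum_of_subset_of_nonneg (monotone_filter_right _ fun w _ => @hBB' w)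
        fun w _ _ => nonneg (q w)
    · exact absurd (hBB' hzB) hzB'
    all_goals exact nonneg'
  exact OrderHom.lfp.monotone hstep z

theorem killedHittingProb_le {q : V → ℝ} (hqK : ∀ z ∈ K, q z = 1)
    (hq : ∀ z ∉ K, ∑ w ∈ G.neighborFinset z, q w ≤ G.degree z * q z) (hqI : ∀ z, q z ∈ I)
    (z : V) : G.killedHittingProb K B z ≤ q z := by
  refine OrderHom.lfp_le (G.killedHittingStep K B) (a := fun z => ⟨q z, hqI z⟩) (fun z => ?_) z
  rw [killedHittingStep_apply]
  split_ifs with hzK hzB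
  · exact Subtype.mk_le_mk.2 (hqK z hzK).ge
  · refine Subtype.mk_le_mk.2 <| div_le_of_le_mul₀ (Nat.cast_nonneg _) (hqI z).1 ?_
    calc ∑ w ∈ G.neighborFinset z with w ∈ B, q w
        ≤ ∑ w ∈ G.neighborFinset z, q w :=
          sum_le_sum_of_subset_of_nonneg (filter_subset _ _) fun w _ _ => (hqI w).1
      _ ≤ q z * G.degree z := mul_comm (q z) _ ▸ hq z hzK
  · exact nonneg'

theorem degree_mul_killedHittingProb {z : V} (hzK : z ∉ K)
    (hzB : insert z (G.neighborFinset z) ⊆ B) :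
    G.degree z * G.killedHittingProb K B z =
      ∑ w ∈ G.neighborFinset z, G.killedHittingProb K B w := by
  have hharm := G.dirichletLaplacian_killedHittingProb hzK (hzB (mem_insert_self _ _))
  rwa [G.dirichletLaplacian_of_neighborFinset_subset ((subset_insert _ _).trans hzB),
    sub_eq_zero] at hharm

theorem tendsto_killedHittingProb {B : ℕ → Finset V} (hB : Monotone B)
    (hexh : ∀ z, ∃ n, z ∈ B n) {h : V → ℝ} (hhK : ∀ z ∈ K, h z = 1)
    (hsuper : ∀ z ∉ K, ∑ w ∈ G.neighborFinset z, h w ≤ G.degree z * h z) (hI : ∀ z, h z ∈ I)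
    (hmin : ∀ q : V → ℝ, (∀ z ∈ K, q z = 1) →
      (∀ z ∉ K, ∑ w ∈ G.neighborFinset z, q w ≤ G.degree z * q z) → (∀ z, 0 ≤ q z) →
      ∀ z, h z ≤ q z)
    (z : V) : Tendsto (fun n => G.killedHittingProb K (B n) z) atTop (nhds (h z)) := by
  set L : V → ℝ := fun z => ⨆ n, G.killedHittingProb K (B n) z
  have hL : ∀ z, Tendsto (fun n => G.killedHittingProb K (B n) z) atTop (nhds (L z)) :=
    fun z => tendsto_atTop_ciSup (fun m n hmn => G.killedHittingProb_mono (hB hmn) z)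
      ⟨1, Set.forall_mem_range.2 fun n => G.killedHittingProb_le_one z⟩
  have hLharm : ∀ z ∉ K, G.degree z * L z = ∑ w ∈ G.neighborFinset z, L w := by
    intro z hzK
    refine tendsto_nhds_unique ((hL z).const_mul _)
      ((tendsto_finsetSum _ fun w _ => hL w).congr' ?_)
    filter_upwards [eventually_subset_of_monotone_of_exhaustive hB hexh
      (insert z (G.neighborFinset z))] with n hn
    exact (G.degree_mul_killedHittingProb hzK hn).symm
  have hLle : ∀ z, L z ≤ h z := fun z => ciSup_le fun n => G.killedHittingProb_le hhK hsuper hI z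
  have hleL : ∀ z, h z ≤ L z := hmin L (fun z hz => by simp [L, killedHittingProb_of_mem _ hz])
    (fun z hz => (hLharm z hz).ge) fun z => Real.iSup_nonneg fun n => G.killedHittingProb_nonneg z
  exact le_antisymm (hLle z) (hleL z) ▸ hL z

theorem sum_card_mul_eq_dirichletLaplacian {x : V} (hx : x ∈ K) (hxB : x ∈ B) {ψ φ : V → ℝ}
    (hψK : ∀ z ∈ K, ψ z = if z = x then 1 else 0)
    (hψ : ∀ z ∈ B, z ∉ K → G.dirichletLaplacian B ψ z = 0) (hφK : ∀ z ∈ K, φ z = 1)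
    (hφ : ∀ z ∈ B, z ∉ K → G.dirichletLaplacian B φ z = 0) :
    ∑ u ∈ B, (#{w ∈ G.neighborFinset u | w ∉ B} : ℝ) * ψ u = G.dirichletLaplacian B φ x := by
  calc ∑ u ∈ B, (#{w ∈ G.neighborFinset u | w ∉ B} : ℝ) * ψ u
      = ∑ u ∈ B, ψ u * G.dirichletLaplacian B 1 u := by
        simp only [dirichletLaplacian_one, mul_comm]
    _ = ∑ u ∈ B, φ u * G.dirichletLaplacian B ψ u := by
        rw [← sum_mul_dirichletLaplacian_comm]
        refine sum_congr rfl fun u hu => ?_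
        by_cases huK : u ∈ K
        · rw [hφK u huK, Pi.one_apply]
        · rw [hψ u hu huK, mul_zero, mul_zero]
    _ = ∑ u ∈ B, ψ u * G.dirichletLaplacian B φ u := sum_mul_dirichletLaplacian_comm _ _ _ _
    _ = G.dirichletLaplacian B φ x := by
        rw [sum_eq_single_of_mem x hxB, hψK x hx, if_pos rfl, one_mul]
        intro u hu hux
        by_cases huK : u ∈ K
        · rw [hψK u huK, if_neg hux, zero_mul]
        · rw [hφ u hu huK, mul_zero]

end Dirichlet

end SimpleGraph

/-- Let `K` be a finite subset of a locally finite connected transient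
graph `G` with root `o`, and `x ∈ K`. The equilibrium measure
`e_K(x) = d(x) · P_x[no return to K]` satisfies
`e_K(x) = lim_n c_{*_n} · P_{*_n}[X_τ = x]`, where `*_n` is obtained by contracting the
complement of the ball `G_n` to a single vertex and `τ` is the first hitting time of
`K ∪ {*_n}`.

Encodings: `hK z = P_z[walk from z visits K at some time t ≥ 0]` is the minimal
nonnegative supersolution equal to `1` on `K` and harmonic off `K`; transience is
`∃ z, hK z < 1`; `P_x[no return to K] = 1 − Σ_{w∼x} hK w / d(x)`. On the contracted
graph, `ψ n z = P_z[walk killed on leaving the ball G_n hits K (before *_n) at x]`, and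
since each edge from the ball to its complement becomes an edge at `*_n`,
`c_{*_n} · P_{*_n}[X_τ = x] = Σ_{u ∈ G_n} #{neighbours of u outside G_n} · ψ n u`,
written below as a `tsum` (the summand vanishes outside the ball). -/
theorem stmt_10 {V : Type*} [DecidableEq V]
    (G : SimpleGraph V) [DecidableRel G.Adj] [∀ v : V, Fintype (G.neighborSet v)]
    (hGconn : G.Connected) (o : V)
    (K : Finset V) (hKne : K.Nonempty) (x : V) (hx : x ∈ K)
    (hK : V → ℝ)
    (hK1 : ∀ z ∈ K, hK z = 1)
    (hKharm : ∀ z, z ∉ K →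
      (G.degree z : ℝ) * hK z = ∑ w ∈ G.neighborFinset z, hK w)
    (hK01 : ∀ z, 0 ≤ hK z ∧ hK z ≤ 1)
    (hKmin : ∀ q : V → ℝ, (∀ z ∈ K, q z = 1) →
      (∀ z, z ∉ K → ∑ w ∈ G.neighborFinset z, q w ≤ (G.degree z : ℝ) * q z) →
      (∀ z, 0 ≤ q z) → ∀ z, hK z ≤ q z)
    (htrans : ∃ z, hK z < 1)
    (ψ : ℕ → V → ℝ)
    (hψb : ∀ n, ∀ z ∈ K, ψ n z = if z = x then 1 else 0)
    (hψharm : ∀ n, ∀ z, z ∉ K → G.dist o z ≤ n →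
      (G.degree z : ℝ) * ψ n z
        = ∑ w ∈ (G.neighborFinset z).filter (fun w => G.dist o w ≤ n), ψ n w)
    (hψ0 : ∀ n z, n < G.dist o z → ψ n z = 0) :
    Tendsto
      (fun n => ∑' u : V,
        (if G.dist o u ≤ n then
          (((G.neighborFinset u).filter (fun w => n < G.dist o w)).card : ℝ) * ψ n u
        else 0))
      atTop
      (nhds ((G.degree x : ℝ)
        * (1 - (∑ w ∈ G.neighborFinset x, hK w) / (G.degree x : ℝ)))) := by
  set B : ℕ → Finset V := fun n => (hGconn.finite_setOf_dist_le o n).toFinset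
  have hB : ∀ n z, z ∈ B n ↔ G.dist o z ≤ n := fun n z => Set.Finite.mem_toFinset _
  have hBmono : Monotone B := fun m n hmn z => by simpa only [hB] using fun h => h.trans hmn
  have hexh : ∀ z, ∃ n, z ∈ B n := fun z => ⟨_, (hB _ z).2 le_rfl⟩
  have hφ : ∀ w, Tendsto (fun n => G.killedHittingProb K (B n) w) atTop (nhds (hK w)) :=
    G.tendsto_killedHittingProb hBmono hexh hK1 (fun z hz => (hKharm z hz).ge) hK01 hKmin
  have hsum : ∀ᶠ n in atTop, ∑' u : V, (if G.dist o u ≤ n then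
        (((G.neighborFinset u).filter (fun w => n < G.dist o w)).card : ℝ) * ψ n u else 0)
      = G.degree x - ∑ w ∈ G.neighborFinset x, G.killedHittingProb K (B n) w := by
    filter_upwards [Finset.eventually_subset_of_monotone_of_exhaustive hBmono hexh
      (insert x (G.neighborFinset x))] with n hn
    have hψ : ∀ z ∈ B n, z ∉ K → G.dirichletLaplacian (B n) (ψ n) z = 0 := fun z hz hzK => by
      rw [SimpleGraph.dirichletLaplacian, hψharm n z hzK ((hB n z).1 hz), sub_eq_zero]
      exact sum_congr (filter_congr fun w _ => (hB n w).symm) fun _ _ => rfl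
    calc _ = ∑ u ∈ B n, (#{w ∈ G.neighborFinset u | w ∉ B n} : ℝ) * ψ n u := by
          rw [tsum_eq_sum (s := B n) fun u hu => if_neg (mt (hB n u).2 hu)]
          refine sum_congr rfl fun u hu => ?_
          rw [if_pos ((hB n u).1 hu)]
          simp only [hB, not_le]
      _ = G.dirichletLaplacian (B n) (G.killedHittingProb K (B n)) x :=
          G.sum_card_mul_eq_dirichletLaplacian hx (hn (mem_insert_self _ _)) (hψb n) hψ
            (fun _ => G.killedHittingProb_of_mem) fun _ hz hzK =>
              G.dirichletLaplacian_killedHittingProb hzK hz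
      _ = _ := by
          rw [G.dirichletLaplacian_of_neighborFinset_subset ((subset_insert _ _).trans hn),
            SimpleGraph.killedHittingProb_of_mem _ hx, mul_one]
  have htarget : (G.degree x : ℝ) * (1 - (∑ w ∈ G.neighborFinset x, hK w) / G.degree x)
      = G.degree x - ∑ w ∈ G.neighborFinset x, hK w := by
    rw [mul_one_sub, G.degree_mul_sum_div_degree subset_rfl]
  rw [htarget]
  exact (tendsto_const_nhds.sub (tendsto_finsetSum _ fun w _ => hφ w)).congr'
    (hsum.mono fun _ => Eq.symm)
end

section
/- Let h : V → ℝ be harmonic on V \ B in a finite weighted graph with boundary B, and let g be any function agreeing with h on B. Then the Dirichlet energy of h is at most the Dirichlet energy of g (the harmonic extension minimizes energy among all extensions of the boundary data). -/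
/-- (Dirichlet principle) In a finite weighted graph, if `h` is harmonic
on `V \ B` and `g` agrees with `h` on `B`, then the Dirichlet energy of `h` is at most
that of `g`: the harmonic extension minimizes energy among all extensions of the
boundary data. (Each edge is counted twice in the double sums, on both sides.) -/
theorem stmt_17 {V : Type*} [Fintype V] [DecidableEq V]
    (c : V → V → ℝ)
    (hsymm : ∀ x y, c x y = c y x)
    (hnonneg : ∀ x y, 0 ≤ c x y)
    (B : Finset V)
    (h g : V → ℝ)
    (hharm : ∀ x, x ∉ B → ∑ y, c x y * (h y - h x) = 0)
    (hagree : ∀ b ∈ B, g b = h b) :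
    ∑ x, ∑ y, c x y * (h x - h y) ^ 2 ≤ ∑ x, ∑ y, c x y * (g x - g y) ^ 2 := by
  set f : V → ℝ := fun x => g x - h x with hf
  have hf0 : ∀ x ∈ B, f x = 0 := by
    intro x hx; simp [hf, hagree x hx]
  -- the cross term vanishes
  have swap : ∑ x, ∑ y, c x y * (h x - h y) * f y
      = -∑ x, ∑ y, c x y * (h x - h y) * f x := by
    rw [Finset.sum_comm, ← Finset.sum_neg_distrib]
    refine Finset.sum_congr rfl fun x _ => ?_
    rw [← Finset.sum_neg_distrib]
    refine Finset.sum_congr rfl fun y _ => ?_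
    rw [hsymm y x]; ring
  have inner0 : ∀ x, f x * ∑ y, c x y * (h x - h y) = 0 := by
    intro x
    by_cases hx : x ∈ B
    · rw [hf0 x hx]; ring
    · have := hharm x hx
      have : ∑ y, c x y * (h x - h y) = 0 := by
        rw [← neg_eq_zero, ← Finset.sum_neg_distrib]
        rw [← this]
        exact Finset.sum_congr rfl fun y _ => by ring
      rw [this]; ring
  have cross : ∑ x, ∑ y, c x y * (h x - h y) * (f x - f y) = 0 := by
    have : ∑ x, ∑ y, c x y * (h x - h y) * (f x - f y)
        = (∑ x, ∑ y, c x y * (h x - h y) * f x)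
          - ∑ x, ∑ y, c x y * (h x - h y) * f y := by
      rw [← Finset.sum_sub_distrib]
      refine Finset.sum_congr rfl fun x _ => ?_
      rw [← Finset.sum_sub_distrib]
      exact Finset.sum_congr rfl fun y _ => by ring
    rw [this, swap, sub_neg_eq_add]
    have : ∀ x, ∑ y, c x y * (h x - h y) * f x
        = f x * ∑ y, c x y * (h x - h y) := by
      intro x
      rw [Finset.mul_sum]
      exact Finset.sum_congr rfl fun y _ => by ring
    simp only [this, inner0]
    simp
  have decomp : ∑ x, ∑ y, c x y * (g x - g y) ^ 2
      = (∑ x, ∑ y, c x y * (h x - h y) ^ 2)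
        + (∑ x, ∑ y, c x y * (f x - f y) ^ 2)
        + 2 * ∑ x, ∑ y, c x y * (h x - h y) * (f x - f y) := by
    rw [Finset.mul_sum, ← Finset.sum_add_distrib, ← Finset.sum_add_distrib]
    refine Finset.sum_congr rfl fun x _ => ?_
    rw [Finset.mul_sum, ← Finset.sum_add_distrib, ← Finset.sum_add_distrib]
    refine Finset.sum_congr rfl fun y _ => ?_
    simp only [hf]; ring
  rw [decomp, cross]
  have hnn : 0 ≤ ∑ x, ∑ y, c x y * (f x - f y) ^ 2 :=
    Finset.sum_nonneg fun x _ => Finset.sum_nonneg fun y _ =>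
      mul_nonneg (hnonneg x y) (sq_nonneg _)
  linarith
end
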